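/- Let φ : ℝ² → ℝ be a C² function satisfying the symmetry-determining equation (1 + p²)·∂²φ/∂p² + 2pq·∂²φ/∂p∂q + (1 + q²)·∂²φ/∂q² = 0 at every point (p,q) ∈ ℝ². Then for every open set Ω ⊆ ℝ² and every C³ solution u : Ω → ℝ of the minimal surface equation E(u) = 0, the function v := φ(∂ₓu, ∂_yu) is an infinitesimal symmetry: for every point (x,y) ∈ Ω, the function ε ↦ E(u + εv)(x,y) is differentiable at ε = 0 with derivative 0. -/

import Mathlib

/-!
Differentiating `E(u + εv)` at `ε = 0` gives the linearised operator `L_u v`, a second-order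
linear operator in `v`. For `v = φ(u_x, u_y)` the chain rule gives
`L_u v = φ_p L_u(u_x) + φ_q L_u(u_y) + (Hessian of φ paired with the principal symbol of L_u
on ∇u_x, ∇u_y)`. Since `E` is translation invariant, `L_u(u_x) = ∂ₓE(u)` and
`L_u(u_y) = ∂_yE(u)`, which vanish on solutions. Writing `r, s, t` for `u_xx, u_xy, u_yy`, the
remaining term is `(r φ_pp + 2 s φ_pq + t φ_qq) E(u) - (r t - s²) D(φ)`, where `D(φ) = 0` is
the determining equation at `(u_x, u_y)`.
-/

/-- Partial derivative in the `x` direction of a function on `ℝ²`. -/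
noncomputable def px (f : ℝ × ℝ → ℝ) (z : ℝ × ℝ) : ℝ := fderiv ℝ f z (1, 0)

/-- Partial derivative in the `y` direction of a function on `ℝ²`. -/
noncomputable def py (f : ℝ × ℝ → ℝ) (z : ℝ × ℝ) : ℝ := fderiv ℝ f z (0, 1)

/-- The two-dimensional minimal surface operator
`E(w) = (1 + w_y²)·w_xx − 2·w_x·w_y·w_xy + (1 + w_x²)·w_yy`. -/
noncomputable def msOp (w : ℝ × ℝ → ℝ) (z : ℝ × ℝ) : ℝ :=
  (1 + (py w z) ^ 2) * px (px w) z - 2 * px w z * py w z * py (px w) z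
    + (1 + (px w z) ^ 2) * py (py w) z

open Filter Topology

section Calculus

variable {f g ψ : ℝ × ℝ → ℝ} {z : ℝ × ℝ}

theorem ContDiffAt.fderiv_apply_right {m n : WithTop ℕ∞} (hf : ContDiffAt ℝ n f z)
    (hmn : m + 1 ≤ n) (e : ℝ × ℝ) : ContDiffAt ℝ m (fun w => fderiv ℝ f w e) z :=
  (hf.fderiv_right hmn).clm_apply contDiffAt_const

theorem fderiv_fderiv_apply (hf : DifferentiableAt ℝ (fderiv ℝ f) z) (e₁ e₂ : ℝ × ℝ) :
    fderiv ℝ (fun w => fderiv ℝ f w e₁) z e₂ = fderiv ℝ (fderiv ℝ f) z e₂ e₁ := by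
  rw [fderiv_clm_apply hf (differentiableAt_const e₁)]
  simp

theorem ContDiffAt.differentiableAt_fderiv_apply (hf : ContDiffAt ℝ 2 f z) (e : ℝ × ℝ) :
    DifferentiableAt ℝ (fun w => fderiv ℝ f w e) z :=
  (hf.fderiv_apply_right (m := 1) le_rfl e).differentiableAt one_ne_zero

theorem px_py_comm (hf : ContDiffAt ℝ 2 f z) : px (py f) z = py (px f) z := by
  have hd := (hf.fderiv_right (m := 1) le_rfl).differentiableAt one_ne_zero
  exact (fderiv_fderiv_apply hd _ _).trans
    ((hf.isSymmSndFDerivAt (by simp) _ _).trans (fderiv_fderiv_apply hd _ _).symm)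

theorem px_py_eventuallyEq (hf : ContDiffAt ℝ 2 f z) : px (py f) =ᶠ[𝓝 z] py (px f) :=
  (hf.eventually (by simp)).mono fun _ hw => px_py_comm hw

theorem px_eq_fderiv (f : ℝ × ℝ → ℝ) : px f = fun w => fderiv ℝ f w (1, 0) := rfl

theorem py_eq_fderiv (f : ℝ × ℝ → ℝ) : py f = fun w => fderiv ℝ f w (0, 1) := rfl

theorem Filter.EventuallyEq.px_eq (h : f =ᶠ[𝓝 z] g) : px f z = px g z := by
  rw [px, px, h.fderiv_eq]

theorem Filter.EventuallyEq.py_eq (h : f =ᶠ[𝓝 z] g) : py f z = py g z := by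
  rw [py, py, h.fderiv_eq]

theorem fderiv_add_mul_apply (hf : DifferentiableAt ℝ f z) (hg : DifferentiableAt ℝ g z)
    (c : ℝ) (e : ℝ × ℝ) :
    fderiv ℝ (fun w => f w + c * g w) z e = fderiv ℝ f z e + c * fderiv ℝ g z e := by
  rw [fderiv_fun_add hf (hg.const_mul c), fderiv_const_mul hg]
  simp

theorem fderiv_fderiv_add_mul_apply (hf : ContDiffAt ℝ 2 f z) (hg : ContDiffAt ℝ 2 g z)
    (c : ℝ) (e₁ e₂ : ℝ × ℝ) :
    fderiv ℝ (fun w => fderiv ℝ (fun w' => f w' + c * g w') w e₁) z e₂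
      = fderiv ℝ (fun w => fderiv ℝ f w e₁) z e₂
        + c * fderiv ℝ (fun w => fderiv ℝ g w e₁) z e₂ := by
  have hlin : (fun w => fderiv ℝ (fun w' => f w' + c * g w') w e₁)
      =ᶠ[𝓝 z] fun w => fderiv ℝ f w e₁ + c * fderiv ℝ g w e₁ := by
    filter_upwards [hf.eventually (by simp), hg.eventually (by simp)] with w hfw hgw
    exact fderiv_add_mul_apply (hfw.differentiableAt (by simp))
      (hgw.differentiableAt (by simp)) c e₁
  rw [hlin.fderiv_eq]
  exact fderiv_add_mul_apply (hf.differentiableAt_fderiv_apply e₁)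
    (hg.differentiableAt_fderiv_apply e₁) c e₂

theorem fderiv_comp_prodMk_apply (hψ : DifferentiableAt ℝ ψ (f z, g z))
    (hf : DifferentiableAt ℝ f z) (hg : DifferentiableAt ℝ g z) (e : ℝ × ℝ) :
    fderiv ℝ (fun w => ψ (f w, g w)) z e
      = px ψ (f z, g z) * fderiv ℝ f z e + py ψ (f z, g z) * fderiv ℝ g z e := by
  rw [fderiv_fun_comp z hψ (hf.prodMk hg), DifferentiableAt.fderiv_prodMk hf hg]
  have he : (fderiv ℝ f z e, fderiv ℝ g z e)
      = fderiv ℝ f z e • ((1 : ℝ), (0 : ℝ))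
        + fderiv ℝ g z e • ((0 : ℝ), (1 : ℝ)) := by
    simp
  simp only [ContinuousLinearMap.comp_apply, ContinuousLinearMap.prod_apply, he, map_add,
    map_smul, smul_eq_mul, px, py]
  ring

theorem fderiv_fderiv_comp_prodMk_apply (hψ : ContDiff ℝ 2 ψ) (hf : ContDiffAt ℝ 2 f z)
    (hg : ContDiffAt ℝ 2 g z) (e₁ e₂ : ℝ × ℝ) :
    fderiv ℝ (fun w => fderiv ℝ (fun w' => ψ (f w', g w')) w e₁) z e₂
      = px (px ψ) (f z, g z) * fderiv ℝ f z e₁ * fderiv ℝ f z e₂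
        + py (px ψ) (f z, g z)
          * (fderiv ℝ f z e₁ * fderiv ℝ g z e₂ + fderiv ℝ g z e₁ * fderiv ℝ f z e₂)
        + py (py ψ) (f z, g z) * fderiv ℝ g z e₁ * fderiv ℝ g z e₂
        + px ψ (f z, g z) * fderiv ℝ (fun w => fderiv ℝ f w e₁) z e₂
        + py ψ (f z, g z) * fderiv ℝ (fun w => fderiv ℝ g w e₁) z e₂ := by
  have hψ1 : Differentiable ℝ ψ := hψ.differentiable (by simp)
  have hpψ : Differentiable ℝ (px ψ) := fun _ => hψ.contDiffAt.differentiableAt_fderiv_apply _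
  have hqψ : Differentiable ℝ (py ψ) := fun _ => hψ.contDiffAt.differentiableAt_fderiv_apply _
  have hf1 := hf.differentiableAt (by simp)
  have hg1 := hg.differentiableAt (by simp)
  have hf' := hf.differentiableAt_fderiv_apply e₁
  have hg' := hg.differentiableAt_fderiv_apply e₁
  have hchain : (fun w => fderiv ℝ (fun w' => ψ (f w', g w')) w e₁)
      =ᶠ[𝓝 z] fun w =>
        px ψ (f w, g w) * fderiv ℝ f w e₁ + py ψ (f w, g w) * fderiv ℝ g w e₁ := by
    filter_upwards [hf.eventually (by simp), hg.eventually (by simp)] with w hfw hgw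
    exact fderiv_comp_prodMk_apply (hψ1 _) (hfw.differentiableAt (by simp))
      (hgw.differentiableAt (by simp)) e₁
  have hpψ' : DifferentiableAt ℝ (fun w => px ψ (f w, g w)) z :=
    (hpψ _).comp z (hf1.prodMk hg1)
  have hqψ' : DifferentiableAt ℝ (fun w => py ψ (f w, g w)) z :=
    (hqψ _).comp z (hf1.prodMk hg1)
  rw [hchain.fderiv_eq, fderiv_fun_add (hpψ'.fun_mul hf') (hqψ'.fun_mul hg'),
    fderiv_fun_mul hpψ' hf', fderiv_fun_mul hqψ' hg']
  simp only [FunLike.coe_add, FunLike.coe_smul, Pi.add_apply, Pi.smul_apply, smul_eq_mul]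
  rw [fderiv_comp_prodMk_apply (hpψ _) hf1 hg1, fderiv_comp_prodMk_apply (hqψ _) hf1 hg1,
    px_py_comm hψ.contDiffAt]
  ring

end Calculus

/-- The minimal surface operator on the jet `(p, q, r, s, t) = (w_x, w_y, w_xx, w_xy, w_yy)`.
-/
def msForm (p q r s t : ℝ) : ℝ := (1 + q ^ 2) * r - 2 * p * q * s + (1 + p ^ 2) * t

def msFormLin (p q r s t p' q' r' s' t' : ℝ) : ℝ :=
  2 * q * q' * r + (1 + q ^ 2) * r' - 2 * (p' * q * s + p * q' * s + p * q * s')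
    + 2 * p * p' * t + (1 + p ^ 2) * t'

theorem HasDerivAt.msForm {p q r s t : ℝ → ℝ} {p' q' r' s' t' x : ℝ}
    (hp : HasDerivAt p p' x) (hq : HasDerivAt q q' x) (hr : HasDerivAt r r' x)
    (hs : HasDerivAt s s' x) (ht : HasDerivAt t t' x) :
    HasDerivAt (fun ε => msForm (p ε) (q ε) (r ε) (s ε) (t ε))
      (msFormLin (p x) (q x) (r x) (s x) (t x) p' q' r' s' t') x := by
  have h := ((((hq.pow 2).const_add 1).mul hr).sub (((hp.const_mul 2).mul hq).mul hs)).add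
    (((hp.pow 2).const_add 1).mul ht)
  refine h.congr_deriv ?_
  simp only [msFormLin, Pi.pow_apply, Pi.mul_apply]
  ring

noncomputable def msLin (u v : ℝ × ℝ → ℝ) (z : ℝ × ℝ) : ℝ :=
  msFormLin (px u z) (py u z) (px (px u) z) (py (px u) z) (py (py u) z)
    (px v z) (py v z) (px (px v) z) (py (px v) z) (py (py v) z)

noncomputable def grad (f : ℝ × ℝ → ℝ) (z : ℝ × ℝ) : ℝ × ℝ := (px f z, py f z)

/-- The principal symbol of `msLin u · z`, as a symmetric bilinear form. -/
noncomputable def msSymbol (u : ℝ × ℝ → ℝ) (z a b : ℝ × ℝ) : ℝ :=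
  (1 + py u z ^ 2) * a.1 * b.1 - px u z * py u z * (a.1 * b.2 + a.2 * b.1)
    + (1 + px u z ^ 2) * a.2 * b.2

section MinimalSurface

variable {u v f g φ : ℝ × ℝ → ℝ} {z : ℝ × ℝ}

theorem hasDerivAt_msOp_add_mul (hu : ContDiffAt ℝ 2 u z) (hv : ContDiffAt ℝ 2 v z) :
    HasDerivAt (fun ε : ℝ => msOp (fun w => u w + ε * v w) z) (msLin u v z) 0 := by
  have hu1 := hu.differentiableAt (by simp)
  have hv1 := hv.differentiableAt (by simp)
  have hline (a b : ℝ) : HasDerivAt (fun ε : ℝ => a + ε * b) b 0 := by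
    simpa using ((hasDerivAt_id (0 : ℝ)).mul_const b).const_add a
  have hexp : (fun ε : ℝ => msOp (fun w => u w + ε * v w) z) = fun ε =>
      msForm (px u z + ε * px v z) (py u z + ε * py v z) (px (px u) z + ε * px (px v) z)
        (py (px u) z + ε * py (px v) z) (py (py u) z + ε * py (py v) z) := by
    funext ε
    simp only [msOp, msForm, px_eq_fderiv, py_eq_fderiv, fderiv_add_mul_apply hu1 hv1,
      fderiv_fderiv_add_mul_apply hu hv]
  rw [hexp]
  simpa [msLin] using
    HasDerivAt.msForm (hline _ _) (hline _ _) (hline _ _) (hline _ _) (hline _ _)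

theorem hasLineDerivAt_msOp (hu : ContDiffAt ℝ 3 u z) (e : ℝ × ℝ) :
    HasLineDerivAt ℝ (msOp u)
      (msFormLin (px u z) (py u z) (px (px u) z) (py (px u) z) (py (py u) z)
        (fderiv ℝ (px u) z e) (fderiv ℝ (py u) z e) (fderiv ℝ (px (px u)) z e)
        (fderiv ℝ (py (px u)) z e) (fderiv ℝ (py (py u)) z e)) z e := by
  have hline (f : ℝ × ℝ → ℝ) (hf : ContDiffAt ℝ 1 f z) :
      HasLineDerivAt ℝ f (fderiv ℝ f z e) z e :=
    (hf.differentiableAt one_ne_zero).hasFDerivAt.hasLineDerivAt e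
  have hp : ContDiffAt ℝ 2 (px u) z := hu.fderiv_apply_right (by norm_num) _
  have hq : ContDiffAt ℝ 2 (py u) z := hu.fderiv_apply_right (by norm_num) _
  have h := HasDerivAt.msForm
    (hline _ (hp.of_le (by norm_num))) (hline _ (hq.of_le (by norm_num)))
    (hline (px (px u)) (hp.fderiv_apply_right le_rfl _))
    (hline (py (px u)) (hp.fderiv_apply_right le_rfl _))
    (hline (py (py u)) (hq.fderiv_apply_right le_rfl _))
  simp only [zero_smul, add_zero] at h
  exact h

/-- `E` commutes with translations, so `∂ₓ E(u) = L_u(u_x)` once third derivatives commute. -/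
theorem msLin_px_eq_zero (hu : ContDiffAt ℝ 3 u z) (hE : msOp u =ᶠ[𝓝 z] 0) :
    msLin u (px u) z = 0 := by
  have h : msFormLin (px u z) (py u z) (px (px u) z) (py (px u) z) (py (py u) z)
      (px (px u) z) (px (py u) z) (px (px (px u)) z) (px (py (px u)) z)
      (px (py (py u)) z) = 0 :=
    (hasLineDerivAt_msOp hu (1, 0)).unique
      (((hasFDerivAt_const (0 : ℝ) z).hasLineDerivAt (1, 0)).congr_of_eventuallyEq hE)
  have hu2 : ContDiffAt ℝ 2 u z := hu.of_le (by norm_num)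
  have hp : ContDiffAt ℝ 2 (px u) z := hu.fderiv_apply_right (by norm_num) _
  have hq : ContDiffAt ℝ 2 (py u) z := hu.fderiv_apply_right (by norm_num) _
  rw [px_py_comm hu2, px_py_comm hp, px_py_comm hq, (px_py_eventuallyEq hu2).py_eq] at h
  exact h

theorem msLin_py_eq_zero (hu : ContDiffAt ℝ 3 u z) (hE : msOp u =ᶠ[𝓝 z] 0) :
    msLin u (py u) z = 0 := by
  have h : msFormLin (px u z) (py u z) (px (px u) z) (py (px u) z) (py (py u) z)
      (py (px u) z) (py (py u) z) (py (px (px u)) z) (py (py (px u)) z)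
      (py (py (py u)) z) = 0 :=
    (hasLineDerivAt_msOp hu (0, 1)).unique
      (((hasFDerivAt_const (0 : ℝ) z).hasLineDerivAt (0, 1)).congr_of_eventuallyEq hE)
  have hu2 : ContDiffAt ℝ 2 u z := hu.of_le (by norm_num)
  have hp : ContDiffAt ℝ 2 (px u) z := hu.fderiv_apply_right (by norm_num) _
  rwa [msLin, px_py_comm hu2, (px_py_eventuallyEq hu2).px_eq, px_py_comm hp,
    (px_py_eventuallyEq hu2).py_eq]

theorem msLin_comp (hφ : ContDiff ℝ 2 φ) (hf : ContDiffAt ℝ 2 f z)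
    (hg : ContDiffAt ℝ 2 g z) :
    msLin u (fun w => φ (f w, g w)) z
      = px φ (f z, g z) * msLin u f z + py φ (f z, g z) * msLin u g z
        + px (px φ) (f z, g z) * msSymbol u z (grad f z) (grad f z)
        + 2 * py (px φ) (f z, g z) * msSymbol u z (grad f z) (grad g z)
        + py (py φ) (f z, g z) * msSymbol u z (grad g z) (grad g z) := by
  simp only [msLin, msFormLin, msSymbol, grad, px_eq_fderiv, py_eq_fderiv,
    fderiv_comp_prodMk_apply ((hφ.differentiable (by simp)) _) (hf.differentiableAt (by simp))
      (hg.differentiableAt (by simp)),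
    fderiv_fderiv_comp_prodMk_apply hφ hf hg]
  ring

end MinimalSurface

/-- Every `C²` solution `φ(p,q)` of the determining equation
`(1 + p²)·φ_pp + 2pq·φ_pq + (1 + q²)·φ_qq = 0` generates a contact symmetry
`v = φ(u_x, u_y)` of the two-dimensional minimal surface equation. -/
theorem determining_equation_gives_contact_symmetry
    (φ : ℝ × ℝ → ℝ) (hφ : ContDiff ℝ 2 φ)
    (hdet : ∀ z : ℝ × ℝ, (1 + z.1 ^ 2) * px (px φ) z + 2 * z.1 * z.2 * py (px φ) z
      + (1 + z.2 ^ 2) * py (py φ) z = 0) :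
    ∀ (Ω : Set (ℝ × ℝ)), IsOpen Ω → ∀ u : ℝ × ℝ → ℝ, ContDiffOn ℝ 3 u Ω →
      (∀ z ∈ Ω, msOp u z = 0) →
      ∀ z ∈ Ω, HasDerivAt
        (fun ε : ℝ => msOp (fun w => u w + ε * φ (px u w, py u w)) z) 0 0 := by
  intro Ω hΩ u hu hms z hz
  have hu3 : ContDiffAt ℝ 3 u z := hu.contDiffAt (hΩ.mem_nhds hz)
  have hE : msOp u =ᶠ[𝓝 z] 0 := eventually_of_mem (hΩ.mem_nhds hz) hms
  have hp : ContDiffAt ℝ 2 (px u) z := hu3.fderiv_apply_right (by norm_num) _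
  have hq : ContDiffAt ℝ 2 (py u) z := hu3.fderiv_apply_right (by norm_num) _
  have hv : ContDiffAt ℝ 2 (fun w => φ (px u w, py u w)) z :=
    hφ.contDiffAt.comp z (hp.prodMk hq)
  refine (hasDerivAt_msOp_add_mul (hu3.of_le (by norm_num)) hv).congr_deriv ?_
  rw [msLin_comp hφ hp hq, msLin_px_eq_zero hu3 hE, msLin_py_eq_zero hu3 hE]
  have hDz := hdet (px u z, py u z)
  have hEz := hms z hz
  simp only [msOp] at hEz
  simp only [msSymbol, grad, px_py_comm (hu3.of_le (by norm_num))]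
  linear_combination (py (px u) z ^ 2 - px (px u) z * py (py u) z) * hDz
    + (px (px u) z * px (px φ) (px u z, py u z)
      + 2 * py (px u) z * py (px φ) (px u z, py u z)
      + py (py u) z * py (py φ) (px u z, py u z)) * hEz
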